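/- arXiv:1507.03286 — 2 statements merged into one kernel-verified Lean document; each statement's English description precedes it below -/
import Mathlib

section
/- Let C be an [n,k,d] binary linear code. Then for every integer a with 1 ≤ a ≤ n, the equality of ideals F̄(C) + Ī(Y,a) = ⟨ȳ_1,…,ȳ_n⟩ holds in S̄ if and only if a ≤ d. -/
open scoped Classical
open MvPolynomial

set_option synthInstance.maxHeartbeats 1000000

noncomputable section

/-- The ideal `I(Y,a)` of `S = 𝔽₂[y_1,…,y_n]` generated by all squarefree
monomials `y_{i_1}⋯y_{i_a}`; it is `S` for `a = 0` and `(0)` for `a > n`. -/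
def sqfreeIdeal (n : ℕ) (a : ℕ) : Ideal (MvPolynomial (Fin n) (ZMod 2)) :=
  Ideal.span {f | ∃ T : Finset (Fin n), T.card = a ∧ f = ∏ i ∈ T, MvPolynomial.X i}

/-- The ideal `⟨y_1²−y_1,…,y_n²−y_n⟩` of field equations. -/
def fieldEqIdeal (n : ℕ) : Ideal (MvPolynomial (Fin n) (ZMod 2)) :=
  Ideal.span {f | ∃ i : Fin n, f = MvPolynomial.X i ^ 2 - MvPolynomial.X i}

/-- The linear form `ℓ_i = ∑_j G_{ji} x_j` dual to the `i`-th column of `G`. -/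
def dualForm {k n : ℕ} (G : Matrix (Fin k) (Fin n) (ZMod 2)) (i : Fin n) :
    MvPolynomial (Fin k) (ZMod 2) :=
  ∑ j, MvPolynomial.C (G j i) * MvPolynomial.X j

/-- `F(C) = ker γ`, where `γ : S → R` is the `𝔽₂`-algebra map `y_i ↦ ℓ_i`. -/
def relIdeal {k n : ℕ} (G : Matrix (Fin k) (Fin n) (ZMod 2)) :
    Ideal (MvPolynomial (Fin n) (ZMod 2)) :=
  RingHom.ker (MvPolynomial.aeval (dualForm G) :
    MvPolynomial (Fin n) (ZMod 2) →ₐ[ZMod 2] MvPolynomial (Fin k) (ZMod 2)).toRingHom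

/-- The binary linear code with generating matrix `G`: the row space of `G`. -/
def code {k n : ℕ} (G : Matrix (Fin k) (Fin n) (ZMod 2)) :
    Submodule (ZMod 2) (Fin n → ZMod 2) :=
  LinearMap.range (Matrix.vecMulLinear G)

/-- `d` is the minimum distance of the binary code generated by `G`. -/
def IsMinDist {k n : ℕ} (G : Matrix (Fin k) (Fin n) (ZMod 2)) (d : ℕ) : Prop :=
  IsLeast {w : ℕ | ∃ v ∈ code G, v ≠ 0 ∧ hammingNorm v = w} d

/-!
Over `𝔽₂`, Alon's Combinatorial Nullstellensatz says that `⟨y_i² - y_i⟩` is the ideal of all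
polynomials vanishing on `𝔽₂ⁿ`. Separating the points outside `V(I)` by elements of `I` upgrades
this to `I + ⟨y_i² - y_i⟩ = 𝕀(V(I))` for every ideal `I`, so ideals of `S̄` are determined by their
zero loci in `𝔽₂ⁿ`. The zero locus of `F(C)` is `C` (a word outside `C` is detected by a parity
check, which is a linear form in `F(C)`), that of `I(Y,a)` is the set of words of weight `< a`,
and that of `⟨y_1,…,y_n⟩` is `{0}`. The equality therefore says that `C` has no nonzero word of
weight `< a`, that is, `a ≤ d`.
-/

open scoped Matrix

namespace MvPolynomial

theorem zeroLocus_vanishingIdeal {K σ : Type*} [Field K] [Fintype K] [Fintype σ]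
    (V : Set (σ → K)) : zeroLocus K (vanishingIdeal K V) = V := by
  refine le_antisymm (fun w hw ↦ ?_) (zeroLocus_vanishingIdeal_le V)
  by_contra hwV
  have hind : indicator w ∈ vanishingIdeal K V := fun x hx ↦
    eval_indicator_apply_eq_zero x w (ne_of_mem_of_not_mem hx hwV)
  exact one_ne_zero ((eval_indicator_apply_eq_one w).symm.trans (hw _ hind))

theorem zeroLocus_sup {k K σ : Type*} [Field k] [Field K] [Algebra k K]
    (I J : Ideal (MvPolynomial σ k)) :
    zeroLocus K (I ⊔ J) = zeroLocus K I ∩ zeroLocus K J :=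
  zeroLocus_vanishingIdeal_galoisConnection.l_sup

theorem zeroLocus_span_range_X {k σ : Type*} [Field k] :
    zeroLocus k (Ideal.span (Set.range (X : σ → MvPolynomial σ k))) = {0} := by
  ext v
  simp only [zeroLocus_span, Set.forall_mem_range, aeval_X]
  exact _root_.funext_iff.symm

end MvPolynomial

theorem Matrix.exists_mulVec_eq_zero_dotProduct_ne_zero {K m n : Type*} [Field K] [Fintype m]
    [Fintype n] [DecidableEq n] {G : Matrix m n K} {v : n → K}
    (hv : v ∉ LinearMap.range G.vecMulLinear) : ∃ c, G *ᵥ c = 0 ∧ v ⬝ᵥ c ≠ 0 := by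
  obtain ⟨f, hfv, hf⟩ := Submodule.exists_dual_map_eq_bot_of_notMem hv inferInstance
  set c : n → K := fun i ↦ f fun j ↦ if i = j then 1 else 0
  have hfc : ∀ x, f x = x ⬝ᵥ c := fun x ↦ f.pi_apply_eq_sum_univ x
  refine ⟨c, funext fun j ↦ ?_, hfc v ▸ hfv⟩
  rw [Matrix.mulVec, ← hfc, Pi.zero_apply]
  have hrow : G.row j ∈ LinearMap.range G.vecMulLinear := ⟨Pi.single j 1, single_one_vecMul j G⟩
  have h := Submodule.mem_map_of_mem (f := f) hrow
  rwa [hf, Submodule.mem_bot] at h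

section BooleanNullstellensatz

variable {n : ℕ}

theorem prod_X_sub_C_zmod_two (i : Fin n) :
    ∏ r : ZMod 2, (X i - C r : MvPolynomial (Fin n) (ZMod 2)) = X i ^ 2 - X i := by
  rw [show (Finset.univ : Finset (ZMod 2)) = {0, 1} from rfl, Finset.prod_pair zero_ne_one]
  simp only [map_zero, map_one]
  ring

theorem fieldEqIdeal_le_vanishingIdeal (V : Set (Fin n → ZMod 2)) :
    fieldEqIdeal n ≤ vanishingIdeal (ZMod 2) V := by
  rw [fieldEqIdeal, Ideal.span_le]
  rintro _ ⟨i, rfl⟩ x -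
  simp [ZMod.pow_card]

theorem vanishingIdeal_univ_le_fieldEqIdeal :
    vanishingIdeal (ZMod 2) (Set.univ : Set (Fin n → ZMod 2)) ≤ fieldEqIdeal n := by
  intro f hf
  obtain ⟨h, -, rfl⟩ := combinatorial_nullstellensatz_exists_linearCombination
    (fun _ ↦ Finset.univ) (fun _ ↦ Finset.univ_nonempty) f fun x _ ↦ hf x trivial
  have hspan : fieldEqIdeal n = Ideal.span (Set.range fun i ↦ ∏ r : ZMod 2, (X i - C r)) := by
    simp only [prod_X_sub_C_zmod_two, fieldEqIdeal, Set.range, eq_comm]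
  rw [hspan, Ideal.span, ← Finsupp.range_linearCombination]
  exact LinearMap.mem_range_self _ h

theorem sup_fieldEqIdeal_eq_vanishingIdeal_zeroLocus (I : Ideal (MvPolynomial (Fin n) (ZMod 2))) :
    I ⊔ fieldEqIdeal n = vanishingIdeal (ZMod 2) (zeroLocus (ZMod 2) I) := by
  refine le_antisymm (sup_le (le_vanishingIdeal_zeroLocus I) (fieldEqIdeal_le_vanishingIdeal _))
    fun f hf ↦ ?_
  have hsep : ∀ v, ∃ g ∈ I, v ∉ zeroLocus (ZMod 2) I → aeval v g = 1 := by
    intro v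
    by_cases hv : v ∈ zeroLocus (ZMod 2) I
    · exact ⟨0, I.zero_mem, fun h ↦ (h hv).elim⟩
    · obtain ⟨g, hgI, hgv⟩ := not_forall₂.mp hv
      exact ⟨g, hgI, fun _ ↦ (by decide : ∀ x : ZMod 2, x ≠ 0 → x = 1) _ hgv⟩
  choose g hgI hgv using hsep
  -- `P ≡ 1` modulo `I`, while `P` vanishes off `V(I)` and `f` vanishes on it.
  set P := ∏ v, (1 - g v)
  have hP : 1 - P ∈ I := by
    rw [← Ideal.Quotient.eq_zero_iff_mem, map_sub, map_one, map_prod]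
    simp [Ideal.Quotient.eq_zero_iff_mem.mpr (hgI _)]
  have hfP : f * P ∈ fieldEqIdeal n := by
    refine vanishingIdeal_univ_le_fieldEqIdeal fun w _ ↦ ?_
    by_cases hw : w ∈ zeroLocus (ZMod 2) I
    · rw [map_mul, hf w hw, zero_mul]
    · rw [map_mul, map_prod, Finset.prod_eq_zero (Finset.mem_univ w)
        (by rw [map_sub, map_one, hgv w hw, sub_self]), mul_zero]
  have hsplit : f = f * (1 - P) + f * P := by ring
  rw [hsplit]
  exact Ideal.add_mem _ (Ideal.mem_sup_left (I.mul_mem_left f hP)) (Ideal.mem_sup_right hfP)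

theorem map_mk_fieldEqIdeal_eq_iff (I J : Ideal (MvPolynomial (Fin n) (ZMod 2))) :
    I.map (Ideal.Quotient.mk (fieldEqIdeal n)) = J.map (Ideal.Quotient.mk (fieldEqIdeal n)) ↔
      zeroLocus (ZMod 2) I = zeroLocus (ZMod 2) J := by
  rw [Ideal.map_eq_iff_sup_ker_eq_of_surjective _ Ideal.Quotient.mk_surjective, Ideal.mk_ker,
    sup_fieldEqIdeal_eq_vanishingIdeal_zeroLocus, sup_fieldEqIdeal_eq_vanishingIdeal_zeroLocus]
  refine ⟨fun h ↦ ?_, fun h ↦ h ▸ rfl⟩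
  simpa only [zeroLocus_vanishingIdeal] using congrArg (zeroLocus (ZMod 2)) h

end BooleanNullstellensatz

section Code

variable {k n : ℕ} (G : Matrix (Fin k) (Fin n) (ZMod 2))

theorem aeval_aeval_dualForm (u : Fin k → ZMod 2) (p : MvPolynomial (Fin n) (ZMod 2)) :
    aeval u (aeval (dualForm G) p) = aeval (u ᵥ* G) p := by
  have hform : (fun i ↦ aeval u (dualForm G i)) = u ᵥ* G := by
    funext i
    simp [dualForm, Matrix.vecMul, dotProduct, mul_comm]
  rw [← bind₁, aeval_bind₁, hform]

theorem aeval_dualForm_linear (c : Fin n → ZMod 2) :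
    aeval (dualForm G) (∑ i, C (c i) * X i) = ∑ j, C ((G *ᵥ c) j) * X j := by
  simp only [map_sum, map_mul, aeval_C, aeval_X, algebraMap_eq, dualForm, Matrix.mulVec,
    dotProduct, Finset.mul_sum, Finset.sum_mul, ← mul_assoc]
  rw [Finset.sum_comm]
  simp only [mul_comm (C (c _))]

theorem zeroLocus_relIdeal : zeroLocus (ZMod 2) (relIdeal G) = code G := by
  ext v
  constructor
  · intro hv
    by_contra hvC
    obtain ⟨c, hGc, hvc⟩ := Matrix.exists_mulVec_eq_zero_dotProduct_ne_zero hvC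
    have hL : ∑ i, C (c i) * X i ∈ relIdeal G := by
      change aeval (dualForm G) _ = 0
      rw [aeval_dualForm_linear, hGc]
      simp
    refine hvc (Eq.trans ?_ (hv _ hL))
    simp [dotProduct, mul_comm]
  · rintro ⟨u, rfl⟩ p hp
    change aeval (dualForm G) p = 0 at hp
    rw [Matrix.vecMulLinear_apply, ← aeval_aeval_dualForm, hp, map_zero]

end Code

theorem zeroLocus_sqfreeIdeal (n a : ℕ) :
    zeroLocus (ZMod 2) (sqfreeIdeal n a) = {v | hammingNorm v < a} := by
  ext v
  rw [sqfreeIdeal, zeroLocus_span]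
  change _ ↔ (Finset.univ.filter (v · ≠ 0)).card < a
  constructor
  · intro hv
    by_contra! hle
    obtain ⟨T, hTsupp, hTcard⟩ := Finset.exists_subset_card_eq hle
    obtain ⟨i, hiT, hvi⟩ := Finset.prod_eq_zero_iff.mp <| by
      simpa only [map_prod, aeval_X] using hv _ ⟨T, hTcard, rfl⟩
    exact (Finset.mem_filter.mp (hTsupp hiT)).2 hvi
  · rintro hv _ ⟨T, rfl, rfl⟩
    obtain ⟨i, hiT, hvi⟩ := Finset.not_subset.mp fun hsub ↦ (Finset.card_le_card hsub).not_gt hv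
    rw [map_prod]
    exact Finset.prod_eq_zero hiT (by simpa using hvi)

theorem inter_setOf_hammingNorm_lt_eq_singleton_zero_iff {ι K : Type*} [Fintype ι] [Zero K]
    [DecidableEq K] {C : Set (ι → K)} (hC : 0 ∈ C) {d a : ℕ}
    (hd : IsLeast {w | ∃ v ∈ C, v ≠ 0 ∧ hammingNorm v = w} d) (ha : 0 < a) :
    C ∩ {v | hammingNorm v < a} = {0} ↔ a ≤ d := by
  constructor
  · intro h
    by_contra! hda
    obtain ⟨v, hvC, hv0, hvd⟩ := hd.1
    exact hv0 (h.subset ⟨hvC, show hammingNorm v < a by omega⟩)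
  · intro had
    refine Set.eq_singleton_iff_unique_mem.mpr ⟨⟨hC, by simpa using ha⟩, ?_⟩
    rintro v ⟨hvC, hva⟩
    by_contra hv0
    exact (hd.2 ⟨v, hvC, hv0, rfl⟩).not_gt (hva.trans_le had)

theorem binary_minDist_iff_general {k n d : ℕ}
    (G : Matrix (Fin k) (Fin n) (ZMod 2)) (hd : IsMinDist G d) :
    ∀ a : ℕ, 1 ≤ a → a ≤ n →
      ((relIdeal G).map (Ideal.Quotient.mk (fieldEqIdeal n)) +
          (sqfreeIdeal n a).map (Ideal.Quotient.mk (fieldEqIdeal n)) =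
        (Ideal.span (Set.range MvPolynomial.X)).map (Ideal.Quotient.mk (fieldEqIdeal n)) ↔
        a ≤ d) := by
  intro a ha _
  rw [Ideal.add_eq_sup, ← Ideal.map_sup, map_mk_fieldEqIdeal_eq_iff, zeroLocus_sup,
    zeroLocus_relIdeal, zeroLocus_sqfreeIdeal, zeroLocus_span_range_X]
  exact inter_setOf_hammingNorm_lt_eq_singleton_zero_iff (code G).zero_mem hd ha

/-- for an `[n,k,d]` binary linear code and `1 ≤ a ≤ n`, one has
`F̄(C) + Ī(Y,a) = ⟨ȳ_1,…,ȳ_n⟩` in `S̄` if and only if `a ≤ d`. -/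
theorem binary_minDist_iff {k n d : ℕ} (hk : 0 < k) (hn : 0 < n)
    (G : Matrix (Fin k) (Fin n) (ZMod 2)) (hrank : G.rank = k) (hd : IsMinDist G d) :
    ∀ a : ℕ, 1 ≤ a → a ≤ n →
      ((relIdeal G).map (Ideal.Quotient.mk (fieldEqIdeal n)) +
          (sqfreeIdeal n a).map (Ideal.Quotient.mk (fieldEqIdeal n)) =
        (Ideal.span (Set.range MvPolynomial.X)).map (Ideal.Quotient.mk (fieldEqIdeal n)) ↔
        a ≤ d) :=
  binary_minDist_iff_general G hd
end
end

section
/- In the ring S̄ = 𝔽_2[y_1,…,y_n]/⟨y_1²−y_1,…,y_n²−y_n⟩, the ideals F_a := Ī(Y, n−a) form a multiplicative filtration: for all integers a, b ≥ 0, one has F_a · F_b ⊆ F_{a+b}, i.e., Ī(Y,n−a) · Ī(Y,n−b) ⊆ Ī(Y, n−a−b). -/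
open scoped Classical
open MvPolynomial

set_option synthInstance.maxHeartbeats 1000000

noncomputable section

/-! In `S̄` every variable is idempotent, so a product of two squarefree monomials is the
squarefree monomial on the union of their supports. If the supports have sizes `n - a` and
`n - b`, the union has at least `n - a ≥ n - a - b` elements, so that monomial lies in
`Ī(Y, n - a - b)`. -/

theorem Finset.isIdempotentElem_prod {ι M : Type*} [CommMonoid M] {f : ι → M}
    (hf : ∀ i, IsIdempotentElem (f i)) (s : Finset ι) : IsIdempotentElem (∏ i ∈ s, f i) :=
  Finset.prod_induction f IsIdempotentElem (fun _ _ ha hb => ha.mul hb) .one fun i _ => hf i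

theorem Finset.prod_mul_prod_eq_prod_union_of_isIdempotentElem {ι M : Type*} [CommMonoid M]
    [DecidableEq ι] {f : ι → M} (hf : ∀ i, IsIdempotentElem (f i)) (s t : Finset ι) :
    (∏ i ∈ s, f i) * ∏ i ∈ t, f i = ∏ i ∈ s ∪ t, f i := by
  have hst : s ∩ t ⊆ s ∪ t := Finset.inter_subset_union
  calc (∏ i ∈ s, f i) * ∏ i ∈ t, f i = (∏ i ∈ s ∪ t, f i) * ∏ i ∈ s ∩ t, f i :=
        Finset.prod_union_inter.symm
    _ = (∏ i ∈ (s ∪ t) \ (s ∩ t), f i) * ((∏ i ∈ s ∩ t, f i) * ∏ i ∈ s ∩ t, f i) := by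
        rw [← Finset.prod_sdiff hst, mul_assoc]
    _ = ∏ i ∈ s ∪ t, f i := by
        rw [(Finset.isIdempotentElem_prod hf _).eq, Finset.prod_sdiff hst]

theorem isIdempotentElem_mk_X {n : ℕ} (i : Fin n) :
    IsIdempotentElem (Ideal.Quotient.mk (fieldEqIdeal n) (X i)) := by
  rw [IsIdempotentElem, ← map_mul, Ideal.Quotient.eq, ← sq]
  exact Ideal.subset_span ⟨i, rfl⟩

theorem mk_prod_X_mul_mk_prod_X {n : ℕ} (T U : Finset (Fin n)) :
    Ideal.Quotient.mk (fieldEqIdeal n) (∏ i ∈ T, X i) *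
        Ideal.Quotient.mk (fieldEqIdeal n) (∏ i ∈ U, X i) =
      Ideal.Quotient.mk (fieldEqIdeal n) (∏ i ∈ T ∪ U, X i) := by
  simp only [map_prod]
  exact Finset.prod_mul_prod_eq_prod_union_of_isIdempotentElem isIdempotentElem_mk_X T U

theorem prod_X_mem_sqfreeIdeal {n a : ℕ} {T : Finset (Fin n)} (h : a ≤ T.card) :
    ∏ i ∈ T, X i ∈ sqfreeIdeal n a := by
  obtain ⟨W, hWT, hW⟩ := Finset.exists_subset_card_eq h
  rw [← Finset.prod_sdiff hWT]
  exact Ideal.mul_mem_left _ _ (Ideal.subset_span ⟨W, hW, rfl⟩)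

/-- in `S̄ = 𝔽₂[y_1,…,y_n]/⟨y_i²−y_i⟩` the ideals
`F_a = Ī(Y,n−a)` form a multiplicative filtration:
`Ī(Y,n−a)·Ī(Y,n−b) ⊆ Ī(Y,n−a−b)` for all `a, b ≥ 0`. -/
theorem sqfree_filtration_mul {n : ℕ} :
    ∀ a b : ℕ,
      (sqfreeIdeal n (n - a)).map (Ideal.Quotient.mk (fieldEqIdeal n)) *
          (sqfreeIdeal n (n - b)).map (Ideal.Quotient.mk (fieldEqIdeal n)) ≤
        (sqfreeIdeal n (n - a - b)).map (Ideal.Quotient.mk (fieldEqIdeal n)) := by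
  intro a b
  rw [← Ideal.map_mul, sqfreeIdeal, sqfreeIdeal, Ideal.span_mul_span', Ideal.map_span,
    Ideal.span_le]
  rintro _ ⟨_, ⟨_, ⟨T, hT, rfl⟩, _, ⟨U, -, rfl⟩, rfl⟩, rfl⟩
  have hcard : n - a - b ≤ (T ∪ U).card := by
    have := Finset.card_le_card (Finset.subset_union_left (s₁ := T) (s₂ := U))
    omega
  rw [map_mul, mk_prod_X_mul_mk_prod_X]
  exact Ideal.mem_map_of_mem _ (prod_X_mem_sqfreeIdeal hcard)
end
end
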